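/- Let c be an acyclic partial edge coloring of G with edge e = ab uncolored, and let β be a candidate color for e. Then β is not valid for e (assigning β to e creates a bichromatic cycle) if and only if there exists a color α ∈ S_{ab} ∩ S_{ba} such that G contains an (α,β,ab)-critical path with respect to c. -/

import Mathlib

open SimpleGraph

/-- Property A: every induced subgraph `H` satisfies `|E(H)| ≤ 2|V(H)| - 1`. -/
def PropertyA {V : Type*} (G : SimpleGraph V) : Prop :=
  ∀ s : Set V, (G.induce s).edgeSet.ncard ≤ 2 * s.ncard - 1

/-- `H` is a minor of `G`: branch sets are disjoint, connected, and adjacency is represented. -/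
def IsMinor {W V : Type*} (H : SimpleGraph W) (G : SimpleGraph V) : Prop :=
  ∃ f : W → Set V,
    (∀ w, (G.induce (f w)).Connected) ∧
    (∀ w₁ w₂, w₁ ≠ w₂ → Disjoint (f w₁) (f w₂)) ∧
    (∀ w₁ w₂, H.Adj w₁ w₂ → ∃ a ∈ f w₁, ∃ b ∈ f w₂, G.Adj a b)

/-- Planarity via Wagner's theorem: no `K₅` minor and no `K₃,₃` minor. -/
def IsPlanar {V : Type*} (G : SimpleGraph V) : Prop :=
  ¬ IsMinor (completeGraph (Fin 5)) G ∧
  ¬ IsMinor (completeBipartiteGraph (Fin 3) (Fin 3)) G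

/-- A proper edge coloring: distinct edges sharing a vertex get distinct colors. -/
def IsProperEdgeColoring {V β : Type*} (G : SimpleGraph V) (c : Sym2 V → β) : Prop :=
  ∀ e ∈ G.edgeSet, ∀ f ∈ G.edgeSet, e ≠ f → (∃ v, v ∈ e ∧ v ∈ f) → c e ≠ c f

/-- An acyclic edge coloring: proper and no cycle uses only two colors. -/
def IsAcyclicEdgeColoring {V β : Type*} (G : SimpleGraph V) (c : Sym2 V → β) : Prop :=
  IsProperEdgeColoring G c ∧
    ∀ (γ δ : β) (v : V) (p : G.Walk v v), p.IsCycle →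
      ¬ ∀ e ∈ p.edges, c e = γ ∨ c e = δ

/-- `G` admits an acyclic edge coloring with at most `k` colors. -/
def AcyclicallyEdgeColorable {V : Type*} (G : SimpleGraph V) (k : ℕ) : Prop :=
  ∃ c : Sym2 V → Fin k, IsAcyclicEdgeColoring G c

/-- A proper partial edge coloring (uncolored edges get `none`). -/
def IsProperPartialEdgeColoring {V : Type*} (G : SimpleGraph V) (c : Sym2 V → Option ℕ) : Prop :=
  ∀ e ∈ G.edgeSet, ∀ f ∈ G.edgeSet, e ≠ f → (∃ v, v ∈ e ∧ v ∈ f) →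
    ∀ γ : ℕ, c e = some γ → c f ≠ some γ

/-- There is a cycle all of whose edges are colored with one of two colors. -/
def HasBichromaticCycle {V : Type*} (G : SimpleGraph V) (c : Sym2 V → Option ℕ) : Prop :=
  ∃ (γ δ : ℕ) (v : V) (p : G.Walk v v), p.IsCycle ∧
    ∀ e ∈ p.edges, c e = some γ ∨ c e = some δ

/-- A valid (acyclic proper) partial edge coloring. -/
def IsAcyclicPartialEdgeColoring {V : Type*} (G : SimpleGraph V) (c : Sym2 V → Option ℕ) : Prop :=
  IsProperPartialEdgeColoring G c ∧ ¬ HasBichromaticCycle G c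

/-- `F_a`: the set of colors appearing on edges incident to `a`. -/
def colorsAt {V : Type*} (G : SimpleGraph V) (c : Sym2 V → Option ℕ) (a : V) : Set ℕ :=
  {γ | ∃ z, G.Adj a z ∧ c s(a, z) = some γ}

/-- `S_{ab} = F_b \ {c(a,b)}`. -/
def Sset {V : Type*} (G : SimpleGraph V) (c : Sym2 V → Option ℕ) (a b : V) : Set ℕ :=
  colorsAt G c b \ {γ | c s(a, b) = some γ}

/-- A maximal `(γ,δ)`-bichromatic path: a path all of whose edges are colored `γ` or `δ`,
which cannot be extended at either end by a `γ`- or `δ`-colored edge. -/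
def IsMaxBichromaticPath {V : Type*} (G : SimpleGraph V) (c : Sym2 V → Option ℕ)
    (γ δ : ℕ) {x y : V} (p : G.Walk x y) : Prop :=
  p.IsPath ∧ (∀ e ∈ p.edges, c e = some γ ∨ c e = some δ) ∧
    ∀ e ∈ G.edgeSet, (x ∈ e ∨ y ∈ e) → (c e = some γ ∨ c e = some δ) → e ∈ p.edges

/-- A `(γ,δ,ab)`-critical path: a maximal `(γ,δ)`-bichromatic path from `a` to `b`
whose first and last edges are colored `γ`. -/
def IsCriticalPath {V : Type*} (G : SimpleGraph V) (c : Sym2 V → Option ℕ)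
    (γ δ : ℕ) (a b : V) (p : G.Walk a b) : Prop :=
  IsMaxBichromaticPath G c γ δ p ∧
    (∃ e, p.edges.head? = some e ∧ c e = some γ) ∧
    (∃ e, p.edges.getLast? = some e ∧ c e = some γ)

/-!
Since `β` is missing at `a` and at `b`, coloring `ab` with `β` keeps the coloring proper, so `β`
is invalid exactly when a bichromatic cycle appears. Such a cycle must pass through `ab` (the old
coloring is acyclic), so it uses `β` and some second color `α`; deleting `ab` leaves an `(α,β)`-path
from `a` to `b`. Its end edges cannot carry `β`, hence carry `α`, and properness at `a` and `b` then
makes the path maximal, i.e. critical. Conversely, a critical path closes up with `ab` into an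
`(α,β)`-cycle.
-/

section

variable {V : Type*} {G : SimpleGraph V} {c : Sym2 V → Option ℕ} {a b : V} {α β : ℕ}

lemma mem_colorsAt_of_mem {e : Sym2 V} {v : V} {γ : ℕ} (he : e ∈ G.edgeSet) (hv : v ∈ e)
    (hγ : c e = some γ) : γ ∈ colorsAt G c v := by
  induction e using Sym2.ind with
  | _ x y =>
    rcases Sym2.mem_iff.mp hv with rfl | rfl
    · exact ⟨y, he, hγ⟩
    · exact ⟨x, G.adj_symm he, by rwa [Sym2.eq_swap]⟩

lemma IsProperPartialEdgeColoring.eq_of_mem (hc : IsProperPartialEdgeColoring G c)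
    {e f : Sym2 V} {v : V} {γ : ℕ} (he : e ∈ G.edgeSet) (hf : f ∈ G.edgeSet) (hve : v ∈ e)
    (hvf : v ∈ f) (hce : c e = some γ) (hcf : c f = some γ) : e = f := by
  by_contra hef
  exact hc e he f hf hef ⟨v, hve, hvf⟩ γ hce hcf

lemma IsProperPartialEdgeColoring.update [DecidableEq V] (hc : IsProperPartialEdgeColoring G c)
    (hβ : β ∉ colorsAt G c a ∪ colorsAt G c b) :
    IsProperPartialEdgeColoring G (Function.update c s(a, b) (some β)) := by
  have hβ_ab : ∀ f ∈ G.edgeSet, f ≠ s(a, b) → ∀ v ∈ s(a, b), v ∈ f →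
      Function.update c s(a, b) (some β) f ≠ some β := by
    intro f hf hfab v hv hvf hcf
    rw [Function.update_of_ne hfab] at hcf
    rcases Sym2.mem_iff.mp hv with rfl | rfl
    exacts [hβ (Or.inl (mem_colorsAt_of_mem hf hvf hcf)),
      hβ (Or.inr (mem_colorsAt_of_mem hf hvf hcf))]
  rintro e he f hf hef ⟨v, hve, hvf⟩ γ hce hcf
  by_cases he_ab : e = s(a, b)
  · subst he_ab
    obtain rfl : β = γ := by simpa using hce
    exact hβ_ab f hf (Ne.symm hef) v hve hvf hcf
  by_cases hf_ab : f = s(a, b)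
  · subst hf_ab
    obtain rfl : β = γ := by simpa using hcf
    exact hβ_ab e he hef v hvf hve hce
  rw [Function.update_of_ne he_ab] at hce
  rw [Function.update_of_ne hf_ab] at hcf
  exact hc e he f hf hef ⟨v, hve, hvf⟩ γ hce hcf

theorem SimpleGraph.Walk.IsCycle.exists_isPath_of_mem_edges {u : V} {q : G.Walk u u}
    (hq : q.IsCycle) (hab : s(a, b) ∈ q.edges) :
    ∃ p : G.Walk a b, p.IsPath ∧ s(a, b) ∉ p.edges ∧ p.edges ⊆ q.edges := by
  -- `ab` is not a bridge of the graph `H` formed by the edges of the cycle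
  set H := G.deleteEdges {e | e ∉ q.edges}
  have hqH : ∀ e ∈ q.edges, e ∈ H.edgeSet := fun e he => by
    rw [edgeSet_deleteEdges]
    exact ⟨q.edges_subset_edgeSet he, not_not.mpr he⟩
  obtain ⟨-, hreach⟩ := adj_and_reachable_delete_edges_iff_exists_cycle.mpr
    ⟨u, q.transfer H hqH, hq.transfer hqH, by rwa [edges_transfer]⟩
  obtain ⟨w, hw⟩ := hreach.exists_isPath
  have hle : H.deleteEdges {s(a, b)} ≤ G := (deleteEdges_le _).trans (deleteEdges_le _)
  have hwe : ∀ e ∈ w.edges, e ∈ (H.deleteEdges {s(a, b)}).edgeSet :=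
    fun e he => w.edges_subset_edgeSet he
  simp only [H, edgeSet_deleteEdges] at hwe
  refine ⟨w.mapLe hle, hw.mapLe hle, ?_, ?_⟩ <;> rw [Walk.edges_mapLe_eq_edges]
  · exact fun h => (hwe _ h).2 rfl
  · exact fun e he => not_not.mp (hwe e he).1.2

lemma exists_isPath_of_hasBichromaticCycle_update [DecidableEq V] (hc : ¬ HasBichromaticCycle G c)
    (h : HasBichromaticCycle G (Function.update c s(a, b) (some β))) :
    ∃ α, ∃ p : G.Walk a b, p.IsPath ∧ ∀ e ∈ p.edges, c e = some α ∨ c e = some β := by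
  obtain ⟨γ, δ, v, q, hq, hqcol⟩ := h
  have habq : s(a, b) ∈ q.edges := by
    by_contra habq
    refine hc ⟨γ, δ, v, q, hq, fun e he => ?_⟩
    rw [← Function.update_of_ne (ne_of_mem_of_not_mem he habq) (some β) c]
    exact hqcol e he
  obtain ⟨p, hp, habp, hpq⟩ := hq.exists_isPath_of_mem_edges habq
  have hpcol : ∀ e ∈ p.edges, c e = some γ ∨ c e = some δ := fun e he => by
    rw [← Function.update_of_ne (ne_of_mem_of_not_mem he habp) (some β) c]
    exact hqcol e (hpq he)
  have hβ : β = γ ∨ β = δ := by simpa using hqcol _ habq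
  rcases hβ with rfl | rfl
  exacts [⟨δ, p, hp, fun e he => (hpcol e he).symm⟩, ⟨γ, p, hp, hpcol⟩]

lemma hasBichromaticCycle_update_of_isPath [DecidableEq V] (hab : G.Adj a b) (hun : c s(a, b) = none)
    {p : G.Walk a b} (hp : p.IsPath) (hcol : ∀ e ∈ p.edges, c e = some α ∨ c e = some β) :
    HasBichromaticCycle G (Function.update c s(a, b) (some β)) := by
  have habp : s(a, b) ∉ p.edges := fun h => by simpa [hun] using hcol _ h
  refine ⟨α, β, a, .cons hab p.reverse, (Walk.cons_isCycle_iff _ hab).mpr ⟨hp.reverse, by simpa⟩,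
    fun e he => ?_⟩
  rw [Walk.edges_cons, Walk.edges_reverse, List.mem_cons, List.mem_reverse] at he
  rcases he with rfl | he
  · exact Or.inr (Function.update_self ..)
  · rw [Function.update_of_ne (ne_of_mem_of_not_mem he habp)]
    exact hcol e he

lemma isCriticalPath_of_isPath (hc : IsProperPartialEdgeColoring G c)
    (hβ : β ∉ colorsAt G c a ∪ colorsAt G c b) (hne : a ≠ b) {p : G.Walk a b} (hp : p.IsPath)
    (hcol : ∀ e ∈ p.edges, c e = some α ∨ c e = some β) :
    α ∈ colorsAt G c a ∧ α ∈ colorsAt G c b ∧ IsCriticalPath G c α β a b p := by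
  have hnil : ¬ p.Nil := Walk.not_nil_of_ne hne
  have hβa : ∀ e ∈ G.edgeSet, a ∈ e → c e ≠ some β :=
    fun e he ha hce => hβ (Or.inl (mem_colorsAt_of_mem he ha hce))
  have hβb : ∀ e ∈ G.edgeSet, b ∈ e → c e ≠ some β :=
    fun e he hb hce => hβ (Or.inr (mem_colorsAt_of_mem he hb hce))
  have hfirst_mem := p.mk_start_snd_mem_edges hnil
  have hlast_mem := p.mk_penultimate_end_mem_edges hnil
  have hfirst_edge := p.edges_subset_edgeSet hfirst_mem
  have hlast_edge := p.edges_subset_edgeSet hlast_mem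
  have hfirst : c s(a, p.snd) = some α :=
    (hcol _ hfirst_mem).resolve_right (hβa _ hfirst_edge (Sym2.mem_mk_left _ _))
  have hlast : c s(p.penultimate, b) = some α :=
    (hcol _ hlast_mem).resolve_right (hβb _ hlast_edge (Sym2.mem_mk_right _ _))
  refine ⟨mem_colorsAt_of_mem hfirst_edge (Sym2.mem_mk_left _ _) hfirst,
    mem_colorsAt_of_mem hlast_edge (Sym2.mem_mk_right _ _) hlast,
    ⟨hp, hcol, ?_⟩, ⟨_, ?_, hfirst⟩, ⟨_, ?_, hlast⟩⟩
  · rintro e he (ha | hb) (hα | hβe)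
    · rwa [hc.eq_of_mem he hfirst_edge ha (Sym2.mem_mk_left _ _) hα hfirst]
    · exact absurd hβe (hβa e he ha)
    · rwa [hc.eq_of_mem he hlast_edge hb (Sym2.mem_mk_right _ _) hα hlast]
    · exact absurd hβe (hβb e he hb)
  · rw [List.head?_eq_some_head (Walk.edges_eq_nil.not.mpr hnil), Walk.head_edges_eq_mk_start_snd]
  · rw [List.getLast?_eq_some_getLast (Walk.edges_eq_nil.not.mpr hnil),
      Walk.getLast_edges_eq_mk_penultimate_end]

end

/-- a candidate color `β` for the uncolored edge `ab` is not valid iff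
there is a color `α ∈ S_{ab} ∩ S_{ba}` with an `(α,β,ab)`-critical path. -/
theorem not_valid_iff_critical_path {V : Type*} [DecidableEq V] (G : SimpleGraph V)
    (c : Sym2 V → Option ℕ) (a b : V) (hab : G.Adj a b)
    (hc : IsAcyclicPartialEdgeColoring G c) (hun : c s(a, b) = none)
    (β : ℕ) (hcand : β ∉ colorsAt G c a ∪ colorsAt G c b) :
    ¬ IsAcyclicPartialEdgeColoring G (Function.update c s(a, b) (some β)) ↔
      ∃ α ∈ Sset G c a b ∩ Sset G c b a,
        ∃ p : G.Walk a b, IsCriticalPath G c α β a b p := by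
  constructor
  · intro hinvalid
    have hcycle : HasBichromaticCycle G (Function.update c s(a, b) (some β)) :=
      not_not.mp (not_and.mp hinvalid (hc.1.update hcand))
    obtain ⟨α, p, hp, hpcol⟩ := exists_isPath_of_hasBichromaticCycle_update hc.2 hcycle
    obtain ⟨hαa, hαb, hcrit⟩ := isCriticalPath_of_isPath hc.1 hcand hab.ne hp hpcol
    exact ⟨α, ⟨⟨hαb, by simp [hun]⟩, ⟨hαa, by simp [Sym2.eq_swap, hun]⟩⟩, p, hcrit⟩
  · rintro ⟨α, -, p, ⟨hp, hpcol, -⟩, -⟩ hvalid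
    exact hvalid.2 (hasBichromaticCycle_update_of_isPath hab hun hp hpcol)
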